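/- Let A, B be bounded selfadjoint operators on a complex Hilbert space H and assume I_≥(A,B) = [λ₋, λ₊] with λ₋ < λ₊. Then for every λ ∈ (λ₋, λ₊) and every nonzero x in the orthogonal complement of ker A ∩ ker B one has ⟨Ax,x⟩ + λ⟨Bx,x⟩ > 0 and −1/(λ₊ − λ) ≤ ⟨Bx,x⟩/(⟨Ax,x⟩ + λ⟨Bx,x⟩) ≤ 1/(λ − λ₋). -/

import Mathlib

/-!
Both endpoint pencils `A + λ₋ B` and `A + λ₊ B` are positive, and `A + λ B` is a strict convex
combination of them, so `⟪(A + λ B) x, x⟫ ≤ 0` forces both endpoint forms to vanish at `x`. A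
positive operator whose form vanishes at `x` kills `x` (write it as `S * S` with `S = √T`), so
`(A + λ₋ B) x = (A + λ₊ B) x = 0`, i.e. `x ∈ ker A ∩ ker B`, and `x = 0`. Once the denominator is
positive, the two bounds are, after cross-multiplying, the positivity of the endpoint forms.
-/

open scoped InnerProductSpace

noncomputable section

variable {H : Type*} [NormedAddCommGroup H] [InnerProductSpace ℂ H] [CompleteSpace H]

/-- The (real) quadratic form associated to an operator. -/
def qf (T : H →L[ℂ] H) (x : H) : ℝ := (⟪T x, x⟫_ℂ).re

/-- Positive semidefinite operator. -/
def PosSemidef (T : H →L[ℂ] H) : Prop := ∀ x, 0 ≤ qf T x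

/-- Positive definite operator (uniformly positive). -/
def PosDef (T : H →L[ℂ] H) : Prop := ∃ α > 0, ∀ x, α * ‖x‖ ^ 2 ≤ qf T x

/-- The set of parameters where the pencil `A + ρ B` is positive semidefinite. -/
def Ige (A B : H →L[ℂ] H) : Set ℝ := {ρ | PosSemidef (A + (ρ : ℂ) • B)}

/-- The set of parameters where the pencil `A + ρ B` is positive definite. -/
def Igt (A B : H →L[ℂ] H) : Set ℝ := {ρ | PosDef (A + (ρ : ℂ) • B)}

/-- An operator is indefinite if its quadratic form takes both signs. -/
def Indefinite (T : H →L[ℂ] H) : Prop := (∃ x, 0 < qf T x) ∧ (∃ x, qf T x < 0)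

end

section

variable {H : Type*} [NormedAddCommGroup H] [InnerProductSpace ℂ H]

lemma qf_add_ofReal_smul (A B : H →L[ℂ] H) (ρ : ℝ) (x : H) :
    qf (A + (ρ : ℂ) • B) x = qf A x + ρ * qf B x := by
  simp only [qf, add_apply, smul_apply, inner_add_left, inner_smul_left, Complex.add_re,
    Complex.mul_re, Complex.conj_re, Complex.conj_im, Complex.ofReal_re, Complex.ofReal_im]
  ring

lemma mem_ker_inf_ker_of_add_smul_apply_eq_zero {A B : H →L[ℂ] H} {ρ₁ ρ₂ : ℂ} (hρ : ρ₁ ≠ ρ₂)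
    {x : H} (h₁ : (A + ρ₁ • B) x = 0) (h₂ : (A + ρ₂ • B) x = 0) :
    x ∈ LinearMap.ker (A : H →ₗ[ℂ] H) ⊓ LinearMap.ker (B : H →ₗ[ℂ] H) := by
  have hBx : B x = 0 := by
    have heq : ρ₁ • B x = ρ₂ • B x := by simpa using h₁.trans h₂.symm
    have : (ρ₁ - ρ₂) • B x = 0 := by rw [sub_smul, heq, sub_self]
    exact (smul_eq_zero.mp this).resolve_left (sub_ne_zero.mpr hρ)
  have hAx : A x = 0 := by simpa [hBx] using h₁
  exact ⟨hAx, hBx⟩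

variable [CompleteSpace H]

theorem ContinuousLinearMap.IsPositive.apply_eq_zero_of_re_inner_eq_zero {T : H →L[ℂ] H}
    (hT : T.IsPositive) {x : H} (hx : (⟪T x, x⟫_ℂ).re = 0) : T x = 0 := by
  set S := CFC.sqrt T
  have hST : S * S = T := CFC.sqrt_mul_sqrt_self T (T.nonneg_iff_isPositive.2 hT)
  have hSx : S x = 0 := by
    have hsymm : ⟪S (S x), x⟫_ℂ = ⟪S x, S x⟫_ℂ :=
      (CFC.sqrt_nonneg T).isSelfAdjoint.isSymmetric (S x) x
    rw [← hST, mul_apply_eq_comp, hsymm] at hx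
    exact (re_inner_self_nonpos (𝕜 := ℂ)).mp hx.le
  rw [← hST, mul_apply_eq_comp, hSx, map_zero]

lemma isPositive_add_ofReal_smul_of_mem_Ige {A B : H →L[ℂ] H} (hA : IsSelfAdjoint A)
    (hB : IsSelfAdjoint B) {ρ : ℝ} (hρ : ρ ∈ Ige A B) : (A + (ρ : ℂ) • B).IsPositive :=
  ContinuousLinearMap.isPositive_def'.2 ⟨hA.add (IsSelfAdjoint.smul (Complex.conj_ofReal ρ) hB), hρ⟩

lemma qf_add_smul_pos_of_mem_Ioo {A B : H →L[ℂ] H} (hA : IsSelfAdjoint A)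
    (hB : IsSelfAdjoint B) {lm lp l : ℝ} (hm : lm ∈ Ige A B) (hp : lp ∈ Ige A B)
    (hl : l ∈ Set.Ioo lm lp) {x : H}
    (hx : x ∈ (LinearMap.ker (A : H →ₗ[ℂ] H) ⊓ LinearMap.ker (B : H →ₗ[ℂ] H))ᗮ) (hx0 : x ≠ 0) :
    0 < qf A x + l * qf B x := by
  by_contra! hle
  obtain ⟨hlm, hlp⟩ := hl
  have hqm := qf_add_ofReal_smul A B lm x ▸ hm x
  have hqp := qf_add_ofReal_smul A B lp x ▸ hp x
  have hAm := (isPositive_add_ofReal_smul_of_mem_Ige hA hB hm).apply_eq_zero_of_re_inner_eq_zero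
    ((qf_add_ofReal_smul A B lm x).trans (by nlinarith))
  have hAp := (isPositive_add_ofReal_smul_of_mem_Ige hA hB hp).apply_eq_zero_of_re_inner_eq_zero
    ((qf_add_ofReal_smul A B lp x).trans (by nlinarith))
  have hker := mem_ker_inf_ker_of_add_smul_apply_eq_zero
    (by exact_mod_cast (hlm.trans hlp).ne) hAm hAp
  exact hx0 ((Submodule.orthogonal_disjoint _).le_bot ⟨hker, hx⟩)

theorem stmt7_general (A B : H →L[ℂ] H) (hA : IsSelfAdjoint A) (hB : IsSelfAdjoint B)
    (lm lp : ℝ) (hI : Ige A B = Set.Icc lm lp) :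
    ∀ l ∈ Set.Ioo lm lp, ∀ x ∈ (LinearMap.ker (A : H →ₗ[ℂ] H) ⊓ LinearMap.ker (B : H →ₗ[ℂ] H))ᗮ, x ≠ 0 →
      0 < qf A x + l * qf B x ∧
      -(1 / (lp - l)) ≤ qf B x / (qf A x + l * qf B x) ∧
      qf B x / (qf A x + l * qf B x) ≤ 1 / (l - lm) := by
  rintro l ⟨hlm, hlp⟩ x hx hx0
  have hm : lm ∈ Ige A B := hI ▸ Set.left_mem_Icc.2 (hlm.trans hlp).le
  have hp : lp ∈ Ige A B := hI ▸ Set.right_mem_Icc.2 (hlm.trans hlp).le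
  have hpos := qf_add_smul_pos_of_mem_Ioo hA hB hm hp ⟨hlm, hlp⟩ hx hx0
  have hqm := qf_add_ofReal_smul A B lm x ▸ hm x
  have hqp := qf_add_ofReal_smul A B lp x ▸ hp x
  refine ⟨hpos, ?_, ?_⟩
  · rw [neg_div', div_le_div_iff₀ (by linarith) hpos]
    nlinarith
  · rw [div_le_div_iff₀ hpos (by linarith)]
    nlinarith

theorem stmt7 (A B : H →L[ℂ] H) (hA : IsSelfAdjoint A) (hB : IsSelfAdjoint B)
    (lm lp : ℝ) (hlt : lm < lp) (hI : Ige A B = Set.Icc lm lp) :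
    ∀ l ∈ Set.Ioo lm lp, ∀ x ∈ (LinearMap.ker (A : H →ₗ[ℂ] H) ⊓ LinearMap.ker (B : H →ₗ[ℂ] H))ᗮ, x ≠ 0 →
      0 < qf A x + l * qf B x ∧
      -(1 / (lp - l)) ≤ qf B x / (qf A x + l * qf B x) ∧
      qf B x / (qf A x + l * qf B x) ≤ 1 / (l - lm) :=
  stmt7_general A B hA hB lm lp hI
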